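/- Hyperbolic analogue of Lemma 2.2, first part (the dual edge formula in Minkowski space). Let p_i, p_j, p_k, p_l ∈ ℍ² with det(p_i,p_j,p_k) > 0 and det(p_i,p_j,p_l) < 0, and let c_ij be the hyperbolic edge weight of this configuration. Let n_k ∈ ℝ³ be the unique vector with ⟨n_k,p_i⟩_M = ⟨n_k,p_j⟩_M = ⟨n_k,p_k⟩_M = −1, and let n_l ∈ ℝ³ be the unique vector with ⟨n_l,p_i⟩_M = ⟨n_l,p_j⟩_M = ⟨n_l,p_l⟩_M = −1 (the dual vertices, i.e. the intersection points of the tangent planes to the hyperboloid at the respective triples). Then n_k − n_l = c_ij·(p_i ×_M p_j). -/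
import Mathlib


noncomputable section

/-- Minkowski inner product on `ℝ³` (signature `(−,+,+)`). -/
def mink (x y : Fin 3 → ℝ) : ℝ := -(x 0 * y 0) + x 1 * y 1 + x 2 * y 2

/-- Cross product on `ℝ³` (Euclidean), used for the determinant. -/
def cross3 (x y : Fin 3 → ℝ) : Fin 3 → ℝ :=
  ![x 1 * y 2 - x 2 * y 1, x 2 * y 0 - x 0 * y 2, x 0 * y 1 - x 1 * y 0]

/-- Standard inner product on `ℝ³`. -/
def dot3 (x y : Fin 3 → ℝ) : ℝ := x 0 * y 0 + x 1 * y 1 + x 2 * y 2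

/-- Determinant of three vectors in `ℝ³`. -/
def det3 (x y z : Fin 3 → ℝ) : ℝ := dot3 (cross3 x y) z

/-- The hyperboloid model of the hyperbolic plane. -/
def inH2 (x : Fin 3 → ℝ) : Prop := mink x x = -1 ∧ 0 < x 0

/-- Inverse hyperbolic cosine. -/
def arcosh (x : ℝ) : ℝ := Real.log (x + Real.sqrt (x ^ 2 - 1))

/-- Hyperbolic angle at `p` between `b` and `c` (all points of `ℍ²`). -/
def hypAngle (p b c : Fin 3 → ℝ) : ℝ :=
  Real.arccos (mink (b + mink p b • p) (c + mink p c • p) /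
    (Real.sqrt (mink (b + mink p b • p) (b + mink p b • p)) *
     Real.sqrt (mink (c + mink p c • p) (c + mink p c • p))))

/-- Minkowski cross product on `ℝ³`. -/
def minkCross (x y : Fin 3 → ℝ) : Fin 3 → ℝ :=
  ![-(x 1 * y 2) + x 2 * y 1, x 2 * y 0 - x 0 * y 2, x 0 * y 1 - x 1 * y 0]

/-- Hyperbolic edge weight of two adjacent hyperbolic triangles `p_i p_j p_k` (positively
oriented) and `p_i p_j p_l` (negatively oriented) sharing the edge `ij`. -/
def hypEdgeWeight (pi pj pk pl : Fin 3 → ℝ) : ℝ :=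
  (Real.tan ((hypAngle pi pj pk + hypAngle pj pk pi - hypAngle pk pi pj) / 2)
   + Real.tan ((hypAngle pi pl pj + hypAngle pj pi pl - hypAngle pl pj pi) / 2))
  / (2 * Real.cosh (arcosh (-(mink pi pj)) / 2) ^ 2)

-- helper lemmas
lemma mink_comm (x y : Fin 3 → ℝ) : mink x y = mink y x := by
  simp only [mink]; ring

lemma mink_add_smul (p q r : Fin 3 → ℝ) (s t : ℝ) :
    mink (q + s • p) (r + t • p)
      = mink q r + s * mink p r + t * mink p q + s * t * mink p p := by
  simp only [mink, Pi.add_apply, Pi.smul_apply, smul_eq_mul]; ring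

lemma expand3 (x y z v : Fin 3 → ℝ) (i : Fin 3) :
    det3 x y z * v i = mink v x * minkCross y z i + mink v y * minkCross z x i
      + mink v z * minkCross x y i := by
  have h : ∀ j : Fin 3, j = 0 ∨ j = 1 ∨ j = 2 := by decide
  rcases h i with rfl | rfl | rfl <;>
    simp only [det3, dot3, cross3, mink, minkCross, Matrix.cons_val_zero,
      Matrix.cons_val_one, Matrix.head_cons, Matrix.cons_val_two, Matrix.tail_cons] <;> ring

lemma hypAngle_symm (p b c : Fin 3 → ℝ) : hypAngle p b c = hypAngle p c b := by
  unfold hypAngle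
  rw [mink_comm (b + mink p b • p) (c + mink p c • p),
    mul_comm (Real.sqrt (mink (b + mink p b • p) (b + mink p b • p)))
      (Real.sqrt (mink (c + mink p c • p) (c + mink p c • p)))]

lemma tan_half_eq {x : ℝ} (h1 : -Real.pi < x) (h2 : x < Real.pi) :
    Real.tan (x / 2) = Real.sin x / (1 + Real.cos x) := by
  have hc : 0 < Real.cos (x / 2) :=
    Real.cos_pos_of_mem_Ioo ⟨by linarith, by linarith⟩
  have hs : Real.sin x = 2 * Real.sin (x / 2) * Real.cos (x / 2) := by
    rw [← Real.sin_two_mul]; congr 1; ring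
  have hco : 1 + Real.cos x = 2 * Real.cos (x / 2) ^ 2 := by
    have h := Real.cos_two_mul (x / 2)
    rw [show 2 * (x / 2) = x by ring] at h
    rw [h]; ring
  rw [Real.tan_eq_sin_div_cos, hs, hco,
    div_eq_div_iff hc.ne' (by positivity)]
  ring

lemma one_le_neg_mink {p q : Fin 3 → ℝ} (hp : inH2 p) (hq : inH2 q) :
    1 ≤ -mink p q := by
  have hp1 : -(p 0 * p 0) + p 1 * p 1 + p 2 * p 2 = -1 := hp.1
  have hq1 : -(q 0 * q 0) + q 1 * q 1 + q 2 * q 2 = -1 := hq.1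
  have key : (p 0 * q 0)^2 = (1 + p 1*q 1 + p 2*q 2)^2 + (p 1 - q 1)^2
      + (p 2 - q 2)^2 + (p 1*q 2 - p 2*q 1)^2 := by
    linear_combination (-(q 0 * q 0)) * hp1 - (1 + p 1*p 1 + p 2*p 2) * hq1
  show (1:ℝ) ≤ -(-(p 0 * q 0) + p 1 * q 1 + p 2 * q 2)
  nlinarith [key, mul_pos hp.2 hq.2, sq_nonneg (p 1 - q 1), sq_nonneg (p 2 - q 2),
    sq_nonneg (p 1*q 2 - p 2*q 1)]

lemma one_lt3 {a b c : ℝ} (ha : 1 ≤ a) (hb : 1 ≤ b) (hc : 1 ≤ c)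
    (hQ : 0 < 1 + 2*a*b*c - a^2 - b^2 - c^2) : 1 < a ∧ 1 < b ∧ 1 < c := by
  refine ⟨?_, ?_, ?_⟩
  · rcases lt_or_eq_of_le ha with h | h
    · exact h
    · exfalso; rw [← h] at hQ; nlinarith [sq_nonneg (b - c)]
  · rcases lt_or_eq_of_le hb with h | h
    · exact h
    · exfalso; rw [← h] at hQ; nlinarith [sq_nonneg (a - c)]
  · rcases lt_or_eq_of_le hc with h | h
    · exact h
    · exfalso; rw [← h] at hQ; nlinarith [sq_nonneg (a - b)]

lemma two_cosh_half {x : ℝ} (hx : 1 ≤ x) :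
    2 * Real.cosh (arcosh x / 2) ^ 2 = x + 1 := by
  have hs : Real.sqrt (x^2 - 1) ^ 2 = x^2 - 1 := Real.sq_sqrt (by nlinarith)
  have hy : 0 < x + Real.sqrt (x^2 - 1) := by nlinarith [Real.sqrt_nonneg (x^2 - 1)]
  have h1 : Real.cosh (arcosh x) = x := by
    rw [arcosh, Real.cosh_eq, Real.exp_log hy, Real.exp_neg, Real.exp_log hy]
    field_simp
    linear_combination hs
  have h2 := Real.cosh_two_mul (arcosh x / 2)
  rw [show 2 * (arcosh x / 2) = arcosh x by ring, h1] at h2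
  have h3 := Real.cosh_sq_sub_sinh_sq (arcosh x / 2)
  linarith

lemma tan_half_eq' {x : ℝ} (h1 : -Real.pi < x) (h2 : x < Real.pi) :
    Real.tan (x / 2) = Real.sin x / (1 + Real.cos x) := by
  have hc : 0 < Real.cos (x / 2) :=
    Real.cos_pos_of_mem_Ioo ⟨by linarith, by linarith⟩
  have hs : Real.sin x = 2 * Real.sin (x / 2) * Real.cos (x / 2) := by
    rw [← Real.sin_two_mul]; congr 1; ring
  have hco : 1 + Real.cos x = 2 * Real.cos (x / 2) ^ 2 := by
    have h := Real.cos_two_mul (x / 2)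
    rw [show 2 * (x / 2) = x by ring] at h
    rw [h]; ring
  rw [Real.tan_eq_sin_div_cos, hs, hco, div_eq_div_iff hc.ne' (by positivity)]
  ring


lemma aux_num_pos {a b c sb sc : ℝ} (ha : 1 < a) (hb : 1 < b) (hc : 1 < c)
    (hQ : 0 < 1 + 2*a*b*c - a^2 - b^2 - c^2) (hsb : 0 < sb) (hsc : 0 < sc)
    (hsb2 : sb^2 = b^2 - 1) (hsc2 : sc^2 = c^2 - 1) :
    0 < (a*c - b)*sb + (a*b - c)*sc := by
  rcases le_or_gt (a*c - b) 0 with hX | hX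
  · have hY : 0 < a*b - c := by nlinarith
    have hbc : (0:ℝ) < b^2 - c^2 := by nlinarith
    have key : ((a*b - c)*sc)^2 - ((a*c - b)*sb)^2
        = (1 + 2*a*b*c - a^2 - b^2 - c^2)*(b^2 - c^2) := by
      linear_combination ((a*b - c)^2) * hsc2 - ((a*c - b)^2) * hsb2
    nlinarith [key, mul_pos hQ hbc, mul_pos hY hsc,
      mul_nonpos_of_nonpos_of_nonneg hX hsb.le]
  · rcases le_or_gt (a*b - c) 0 with hY | hY
    · have hbc : (0:ℝ) < c^2 - b^2 := by nlinarith
      have key : ((a*c - b)*sb)^2 - ((a*b - c)*sc)^2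
          = (1 + 2*a*b*c - a^2 - b^2 - c^2)*(c^2 - b^2) := by
        linear_combination ((a*c - b)^2) * hsb2 - ((a*b - c)^2) * hsc2
      nlinarith [key, mul_pos hQ hbc, mul_pos hX hsb,
        mul_nonpos_of_nonpos_of_nonneg hY hsc.le]
    · exact add_pos (mul_pos hX hsb) (mul_pos hY hsc)

lemma aux_sum_pos {x u v : ℝ} (hu : 0 < u) (hx : 0 < x) (hv : 0 < v * x) :
    0 < u * (v * x) / (x * (u * x)) ∧ True := ⟨by positivity, trivial⟩

lemma aux_div_pos {N D : ℝ} (hN : 0 < N) (hD : 0 < D) : 0 < N / D := div_pos hN hD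

lemma aux_one_plus_pos {x K M : ℝ} (h : (1 + x) * K = M) (hK : 0 < K) (hM : 0 < M) :
    0 < 1 + x := by nlinarith

set_option maxHeartbeats 1000000 in
lemma tan_formula {a b c A B C : ℝ} (ha : 1 < a) (hb : 1 < b) (hc : 1 < c)
    (hQ : 0 < 1 + 2*a*b*c - a^2 - b^2 - c^2)
    (hA : A = Real.arccos ((a*c - b) / (Real.sqrt (a^2 - 1) * Real.sqrt (c^2 - 1))))
    (hB : B = Real.arccos ((a*b - c) / (Real.sqrt (b^2 - 1) * Real.sqrt (a^2 - 1))))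
    (hC : C = Real.arccos ((b*c - a) / (Real.sqrt (c^2 - 1) * Real.sqrt (b^2 - 1)))) :
    Real.tan ((A + B - C) / 2)
      = (b + c - a - 1) / Real.sqrt (1 + 2*a*b*c - a^2 - b^2 - c^2) := by
  have ha2 : (0:ℝ) < a^2 - 1 := by nlinarith
  have hb2 : (0:ℝ) < b^2 - 1 := by nlinarith
  have hc2 : (0:ℝ) < c^2 - 1 := by nlinarith
  set sa := Real.sqrt (a^2 - 1) with hsadef
  set sb := Real.sqrt (b^2 - 1) with hsbdef
  set sc := Real.sqrt (c^2 - 1) with hscdef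
  set sQ := Real.sqrt (1 + 2*a*b*c - a^2 - b^2 - c^2) with hsqdef
  have hsa : 0 < sa := Real.sqrt_pos.mpr ha2
  have hsb : 0 < sb := Real.sqrt_pos.mpr hb2
  have hsc : 0 < sc := Real.sqrt_pos.mpr hc2
  have hsq : 0 < sQ := Real.sqrt_pos.mpr hQ
  have hsa2 : sa^2 = a^2 - 1 := Real.sq_sqrt ha2.le
  have hsb2 : sb^2 = b^2 - 1 := Real.sq_sqrt hb2.le
  have hsc2 : sc^2 = c^2 - 1 := Real.sq_sqrt hc2.le
  have hsq2 : sQ^2 = 1 + 2*a*b*c - a^2 - b^2 - c^2 := Real.sq_sqrt hQ.le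
  -- bounds
  have hsac : 0 < sa * sc := mul_pos hsa hsc
  have hsba : 0 < sb * sa := mul_pos hsb hsa
  have hscb : 0 < sc * sb := mul_pos hsc hsb
  have hQA : (a*c - b)^2 < (sa*sc)^2 := by
    rw [mul_pow, hsa2, hsc2]; nlinarith
  have hQB : (a*b - c)^2 < (sb*sa)^2 := by
    rw [mul_pow, hsb2, hsa2]; nlinarith
  have hQC : (b*c - a)^2 < (sc*sb)^2 := by
    rw [mul_pow, hsc2, hsb2]; nlinarith
  have hA1 : -1 < (a*c - b)/(sa*sc) := by
    rw [lt_div_iff₀ hsac]; nlinarith [hQA, hsac]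
  have hA2 : (a*c - b)/(sa*sc) < 1 := by
    rw [div_lt_one hsac]; nlinarith [hQA, hsac]
  have hB1 : -1 < (a*b - c)/(sb*sa) := by
    rw [lt_div_iff₀ hsba]; nlinarith [hQB, hsba]
  have hB2 : (a*b - c)/(sb*sa) < 1 := by
    rw [div_lt_one hsba]; nlinarith [hQB, hsba]
  have hC1 : -1 < (b*c - a)/(sc*sb) := by
    rw [lt_div_iff₀ hscb]; nlinarith [hQC, hscb]
  have hC2 : (b*c - a)/(sc*sb) < 1 := by
    rw [div_lt_one hscb]; nlinarith [hQC, hscb]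
  -- cos values
  have hcA : Real.cos A = (a*c - b)/(sa*sc) := by
    rw [hA, Real.cos_arccos hA1.le hA2.le]
  have hcB : Real.cos B = (a*b - c)/(sb*sa) := by
    rw [hB, Real.cos_arccos hB1.le hB2.le]
  have hcC : Real.cos C = (b*c - a)/(sc*sb) := by
    rw [hC, Real.cos_arccos hC1.le hC2.le]
  have hCA : Real.cos A * (sa*sc) = a*c - b := by
    rw [hcA, div_mul_cancel₀ _ hsac.ne']
  have hCB : Real.cos B * (sa*sb) = a*b - c := by
    rw [hcB, mul_comm sa sb, div_mul_cancel₀ _ hsba.ne']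
  have hCC : Real.cos C * (sb*sc) = b*c - a := by
    rw [hcC, mul_comm sb sc, div_mul_cancel₀ _ hscb.ne']
  -- sin values
  have hSA : Real.sin A * (sa*sc) = sQ := by
    rw [hA, Real.sin_arccos]
    have h1 : 1 - ((a*c - b)/(sa*sc))^2 = (sQ/(sa*sc))^2 := by
      field_simp
      linear_combination (sc^2) * hsa2 + (a^2 - 1) * hsc2 - hsq2
    rw [h1, Real.sqrt_sq (by positivity), div_mul_cancel₀ _ hsac.ne']
  have hSB : Real.sin B * (sa*sb) = sQ := by
    rw [hB, Real.sin_arccos]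
    have h1 : 1 - ((a*b - c)/(sb*sa))^2 = (sQ/(sb*sa))^2 := by
      field_simp
      linear_combination (sa^2) * hsb2 + (b^2 - 1) * hsa2 - hsq2
    rw [h1, Real.sqrt_sq (by positivity), mul_comm sa sb, div_mul_cancel₀ _ hsba.ne']
  have hSC : Real.sin C * (sb*sc) = sQ := by
    rw [hC, Real.sin_arccos]
    have h1 : 1 - ((b*c - a)/(sc*sb))^2 = (sQ/(sc*sb))^2 := by
      field_simp
      linear_combination (sb^2) * hsc2 + (c^2 - 1) * hsb2 - hsq2
    rw [h1, Real.sqrt_sq (by positivity), mul_comm sb sc, div_mul_cancel₀ _ hscb.ne']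
  -- angle ranges
  have hA0 : 0 < A := by rw [hA]; exact Real.arccos_pos.mpr hA2
  have hB0 : 0 < B := by rw [hB]; exact Real.arccos_pos.mpr hB2
  have hC0 : 0 < C := by rw [hC]; exact Real.arccos_pos.mpr hC2
  have hApi : A < Real.pi := by
    rw [hA]
    refine lt_of_le_of_ne (Real.arccos_le_pi _) (fun h => ?_)
    have := Real.arccos_eq_pi.mp h; linarith
  have hBpi : B < Real.pi := by
    rw [hB]
    refine lt_of_le_of_ne (Real.arccos_le_pi _) (fun h => ?_)
    have := Real.arccos_eq_pi.mp h; linarith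
  have hCpi : C < Real.pi := by
    rw [hC]
    refine lt_of_le_of_ne (Real.arccos_le_pi _) (fun h => ?_)
    have := Real.arccos_eq_pi.mp h; linarith
  -- cos A + cos B > 0
  have hsum : 0 < Real.cos A + Real.cos B := by
    have hnum : 0 < (a*c - b)*sb + (a*b - c)*sc :=
      aux_num_pos ha hb hc hQ hsb hsc hsb2 hsc2
    rw [hcA, hcB, div_add_div _ _ hsac.ne' hsba.ne']
    refine div_pos ?_ (by positivity)
    calc (0:ℝ) < sa * ((a*c - b)*sb + (a*b - c)*sc) := mul_pos hsa hnum
      _ = (a*c - b) * (sb*sa) + sa*sc * (a*b - c) := by ring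
  have hAB : A + B < Real.pi := by
    by_contra hcon
    push_neg at hcon
    have h1 : Real.pi - B ≤ A := by linarith
    have h2 : Real.cos A ≤ Real.cos (Real.pi - B) :=
      Real.cos_le_cos_of_nonneg_of_le_pi (by linarith) hApi.le h1
    rw [Real.cos_pi_sub] at h2
    linarith
  have ht1 : -Real.pi < A + B - C := by linarith
  have ht2 : A + B - C < Real.pi := by linarith
  rw [tan_half_eq' ht1 ht2]
  have F1 : (1 + Real.cos (A + B - C)) * (sa^2*sb^2*sc^2)
      = (a - 1)*(b + 1)*(c + 1)*(1 + 2*a*b*c - a^2 - b^2 - c^2) := by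
    rw [Real.cos_sub, Real.cos_add, Real.sin_add]
    linear_combination (sa*sb^2*sc*(Real.sin B)*(Real.sin C) + sa*sb^2*sc*(Real.cos B)*(Real.cos C)) * hCA +
      ((-1)*sa*sb^2*sc*(Real.sin B)*(Real.cos C) + sa*sb^2*sc*(Real.cos B)*(Real.sin C)) * hSA +
      (sb*sc*sQ*(Real.sin C) + (-1)*b*sb*sc*(Real.cos C) + a*c*sb*sc*(Real.cos C)) * hCB +
      ((-1)*sb*sc*sQ*(Real.cos C) + (-1)*b*sb*sc*(Real.sin C) + a*c*sb*sc*(Real.sin C)) * hSB +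
      ((-1)*sQ^2 + b*c + (-1)*a*c^2 + (-1)*a*b^2 + a^2*b*c) * hCC +
      ((-1)*c*sQ + (-1)*b*sQ + a*c*sQ + a*b*sQ) * hSC +
      (sb^2*sc^2) * hsa2 +
      ((-1)*sc^2 + a^2*sc^2) * hsb2 +
      ((1) + (-1)*b^2 + (-1)*a^2 + a^2*b^2) * hsc2 +
      ((-1)*c + (-1)*b + (-1)*b*c + a + a*c + a*b) * hsq2
  have F2 : Real.sin (A + B - C) * (sa^2*sb^2*sc^2)
      = sQ*((a - 1)*(b + 1)*(c + 1)*(b + c - 1 - a)) := by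
    rw [Real.sin_sub, Real.sin_add, Real.cos_add]
    linear_combination (sa*sb^2*sc*(Real.sin B)*(Real.cos C) + (-1)*sa*sb^2*sc*(Real.cos B)*(Real.sin C)) * hCA +
      (sa*sb^2*sc*(Real.sin B)*(Real.sin C) + sa*sb^2*sc*(Real.cos B)*(Real.cos C)) * hSA +
      (sb*sc*sQ*(Real.cos C) + b*sb*sc*(Real.sin C) + (-1)*a*c*sb*sc*(Real.sin C)) * hCB +
      (sb*sc*sQ*(Real.sin C) + (-1)*b*sb*sc*(Real.cos C) + a*c*sb*sc*(Real.cos C)) * hSB +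
      ((-1)*c*sQ + (-1)*b*sQ + a*c*sQ + a*b*sQ) * hCC +
      (sQ^2 + (-1)*b*c + a*c^2 + a*b^2 + (-1)*a^2*b*c) * hSC +
      (sQ) * hsq2
  have hDpos : 0 < sa^2*sb^2*sc^2 := by positivity
  have hprod : 0 < (a - 1)*(b + 1)*(c + 1)*(1 + 2*a*b*c - a^2 - b^2 - c^2) := by
    have h1 : (0:ℝ) < a - 1 := by linarith
    have h2 : (0:ℝ) < b + 1 := by linarith
    have h3 : (0:ℝ) < c + 1 := by linarith
    exact mul_pos (mul_pos (mul_pos h1 h2) h3) hQ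
  have hden : 0 < 1 + Real.cos (A + B - C) := aux_one_plus_pos F1 hDpos hprod
  rw [div_eq_div_iff hden.ne' hsq.ne']
  have main : (Real.sin (A + B - C) * sQ) * (sa^2*sb^2*sc^2)
      = ((b + c - a - 1) * (1 + Real.cos (A + B - C))) * (sa^2*sb^2*sc^2) := by
    linear_combination sQ * F2 - (b + c - a - 1) * F1
      + ((a - 1)*(b + 1)*(c + 1)*(b + c - 1 - a)) * hsq2
  exact mul_right_cancel₀ hDpos.ne' main

lemma tri (p q r : Fin 3 → ℝ) (hp : inH2 p) (hq : inH2 q) (hr : inH2 r)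
    (hQ : 0 < 1 + 2*(-mink p q)*(-mink q r)*(-mink r p)
        - (-mink p q)^2 - (-mink q r)^2 - (-mink r p)^2) :
    Real.tan ((hypAngle p q r + hypAngle q r p - hypAngle r p q) / 2)
      = ((-mink q r) + (-mink r p) - (-mink p q) - 1)
        / Real.sqrt (1 + 2*(-mink p q)*(-mink q r)*(-mink r p)
            - (-mink p q)^2 - (-mink q r)^2 - (-mink r p)^2) := by
  obtain ⟨ha, hb, hc⟩ := one_lt3 (one_le_neg_mink hp hq) (one_le_neg_mink hq hr)
    (one_le_neg_mink hr hp) hQ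
  have eA : hypAngle p q r = Real.arccos (((-mink p q)*(-mink r p) - (-mink q r))
      / (Real.sqrt ((-mink p q)^2 - 1) * Real.sqrt ((-mink r p)^2 - 1))) := by
    have m1 : mink (q + mink p q • p) (q + mink p q • p) = (-mink p q)^2 - 1 := by
      rw [mink_add_smul, hp.1, hq.1]; ring
    have m2 : mink (r + mink p r • p) (r + mink p r • p) = (-mink r p)^2 - 1 := by
      rw [mink_add_smul, hp.1, hr.1, mink_comm p r]; ring
    have m3 : mink (q + mink p q • p) (r + mink p r • p)
        = (-mink p q)*(-mink r p) - (-mink q r) := by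
      rw [mink_add_smul, hp.1, mink_comm p r]; ring
    unfold hypAngle
    rw [m3, m1, m2]
  have eB : hypAngle q r p = Real.arccos (((-mink p q)*(-mink q r) - (-mink r p))
      / (Real.sqrt ((-mink q r)^2 - 1) * Real.sqrt ((-mink p q)^2 - 1))) := by
    have m1 : mink (r + mink q r • q) (r + mink q r • q) = (-mink q r)^2 - 1 := by
      rw [mink_add_smul, hq.1, hr.1]; ring
    have m2 : mink (p + mink q p • q) (p + mink q p • q) = (-mink p q)^2 - 1 := by
      rw [mink_add_smul, hq.1, hp.1, mink_comm q p]; ring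
    have m3 : mink (r + mink q r • q) (p + mink q p • q)
        = (-mink p q)*(-mink q r) - (-mink r p) := by
      rw [mink_add_smul, hq.1, mink_comm q p, mink_comm r p]; ring
    unfold hypAngle
    rw [m3, m1, m2]
  have eC : hypAngle r p q = Real.arccos (((-mink q r)*(-mink r p) - (-mink p q))
      / (Real.sqrt ((-mink r p)^2 - 1) * Real.sqrt ((-mink q r)^2 - 1))) := by
    have m1 : mink (p + mink r p • r) (p + mink r p • r) = (-mink r p)^2 - 1 := by
      rw [mink_add_smul, hr.1, hp.1]; ring
    have m2 : mink (q + mink r q • r) (q + mink r q • r) = (-mink q r)^2 - 1 := by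
      rw [mink_add_smul, hr.1, hq.1, mink_comm r q]; ring
    have m3 : mink (p + mink r p • r) (q + mink r q • r)
        = (-mink q r)*(-mink r p) - (-mink p q) := by
      rw [mink_add_smul, hr.1, mink_comm r q]; ring
    unfold hypAngle
    rw [m3, m1, m2]
  exact tan_formula ha hb hc hQ eA eB eC

lemma sq_gt_one_of_lt_neg {m : ℝ} (h : 1 < -m) : 0 < m^2 - 1 := by nlinarith


set_option maxHeartbeats 1000000 in
/-- Hyperbolic analogue of Lemma 2.2, first part: the dual edge joining the dual vertices
of two adjacent hyperbolic triangles equals the hyperbolic edge weight times the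
Minkowski cross product `p_i ×_M p_j`. -/
theorem hyp_dual_edge_formula
    (pi pj pk pl : Fin 3 → ℝ)
    (hpi : inH2 pi) (hpj : inH2 pj) (hpk : inH2 pk) (hpl : inH2 pl)
    (hdetk : 0 < det3 pi pj pk) (hdetl : det3 pi pj pl < 0)
    (nk nl : Fin 3 → ℝ)
    (hki : mink nk pi = -1) (hkj : mink nk pj = -1) (hkk : mink nk pk = -1)
    (hli : mink nl pi = -1) (hlj : mink nl pj = -1) (hll : mink nl pl = -1) :
    nk - nl = hypEdgeWeight pi pj pk pl • minkCross pi pj := by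
  have hpi' : -(pi 0 * pi 0) + pi 1 * pi 1 + pi 2 * pi 2 = -1 := hpi.1
  have hpj' : -(pj 0 * pj 0) + pj 1 * pj 1 + pj 2 * pj 2 = -1 := hpj.1
  have hpk' : -(pk 0 * pk 0) + pk 1 * pk 1 + pk 2 * pk 2 = -1 := hpk.1
  have hpl' : -(pl 0 * pl 0) + pl 1 * pl 1 + pl 2 * pl 2 = -1 := hpl.1
  have hQ1id : det3 pi pj pk ^ 2
      = 1 + 2*(-mink pi pj)*(-mink pj pk)*(-mink pk pi)
        - (-mink pi pj)^2 - (-mink pj pk)^2 - (-mink pk pi)^2 := by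
    simp only [det3, dot3, cross3, mink, Matrix.cons_val_zero, Matrix.cons_val_one,
      Matrix.head_cons, Matrix.cons_val_two, Matrix.tail_cons]
    linear_combination ((-1)*(pk 0)^2 + (-1)*(pj 2)^2*(pk 1)^2 + (2)*(pj 1)*(pj 2)*(pk 1)*(pk 2) + (-1)*(pj 1)^2*(pk 2)^2 + (-2)*(pj 0)*(pj 2)*(pk 0)*(pk 2) + (-2)*(pj 0)*(pj 1)*(pk 0)*(pk 1) + (-1)*(pj 0)^2 + (2)*(pj 0)^2*(pk 0)^2) * hpi' +
      ((-1) + (pk 0)^2 + (-1)*(pi 2)^2 + (-1)*(pi 2)^2*(pk 1)^2 + (2)*(pi 2)^2*(pk 0)^2 + (2)*(pi 1)*(pi 2)*(pk 1)*(pk 2) + (-1)*(pi 1)^2 + (-1)*(pi 1)^2*(pk 2)^2 + (2)*(pi 1)^2*(pk 0)^2 + (-2)*(pi 0)*(pi 2)*(pk 0)*(pk 2) + (-2)*(pi 0)*(pi 1)*(pk 0)*(pk 1)) * hpj' +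
      ((pj 2)^2 + (pj 1)^2 + (pi 2)^2 + (2)*(pi 2)^2*(pj 2)^2 + (pi 2)^2*(pj 1)^2 + (2)*(pi 1)*(pi 2)*(pj 1)*(pj 2) + (pi 1)^2 + (pi 1)^2*(pj 2)^2 + (2)*(pi 1)^2*(pj 1)^2 + (-2)*(pi 0)*(pi 2)*(pj 0)*(pj 2) + (-2)*(pi 0)*(pi 1)*(pj 0)*(pj 1)) * hpk'
  have hQ2id : det3 pi pj pl ^ 2
      = 1 + 2*(-mink pi pj)*(-mink pj pl)*(-mink pl pi)
        - (-mink pi pj)^2 - (-mink pj pl)^2 - (-mink pl pi)^2 := by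
    simp only [det3, dot3, cross3, mink, Matrix.cons_val_zero, Matrix.cons_val_one,
      Matrix.head_cons, Matrix.cons_val_two, Matrix.tail_cons]
    linear_combination ((-1)*(pl 0)^2 + (-1)*(pj 2)^2*(pl 1)^2 + (2)*(pj 1)*(pj 2)*(pl 1)*(pl 2) + (-1)*(pj 1)^2*(pl 2)^2 + (-2)*(pj 0)*(pj 2)*(pl 0)*(pl 2) + (-2)*(pj 0)*(pj 1)*(pl 0)*(pl 1) + (-1)*(pj 0)^2 + (2)*(pj 0)^2*(pl 0)^2) * hpi' +
      ((-1) + (pl 0)^2 + (-1)*(pi 2)^2 + (-1)*(pi 2)^2*(pl 1)^2 + (2)*(pi 2)^2*(pl 0)^2 + (2)*(pi 1)*(pi 2)*(pl 1)*(pl 2) + (-1)*(pi 1)^2 + (-1)*(pi 1)^2*(pl 2)^2 + (2)*(pi 1)^2*(pl 0)^2 + (-2)*(pi 0)*(pi 2)*(pl 0)*(pl 2) + (-2)*(pi 0)*(pi 1)*(pl 0)*(pl 1)) * hpj' +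
      ((pj 2)^2 + (pj 1)^2 + (pi 2)^2 + (2)*(pi 2)^2*(pj 2)^2 + (pi 2)^2*(pj 1)^2 + (2)*(pi 1)*(pi 2)*(pj 1)*(pj 2) + (pi 1)^2 + (pi 1)^2*(pj 2)^2 + (2)*(pi 1)^2*(pj 1)^2 + (-2)*(pi 0)*(pi 2)*(pj 0)*(pj 2) + (-2)*(pi 0)*(pi 1)*(pj 0)*(pj 1)) * hpl'
  have hQ1 : 0 < 1 + 2*(-mink pi pj)*(-mink pj pk)*(-mink pk pi)
      - (-mink pi pj)^2 - (-mink pj pk)^2 - (-mink pk pi)^2 := by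
    rw [← hQ1id]; exact pow_pos hdetk 2
  have hQ2 : 0 < 1 + 2*(-mink pi pj)*(-mink pj pl)*(-mink pl pi)
      - (-mink pi pj)^2 - (-mink pj pl)^2 - (-mink pl pi)^2 := by
    rw [← hQ2id]
    exact lt_of_lt_of_eq (pow_pos (neg_pos.mpr hdetl) 2) (by ring)
  have hsq1 : Real.sqrt (1 + 2*(-mink pi pj)*(-mink pj pk)*(-mink pk pi)
      - (-mink pi pj)^2 - (-mink pj pk)^2 - (-mink pk pi)^2) = det3 pi pj pk := by
    rw [← hQ1id, Real.sqrt_sq hdetk.le]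
  have hsq2 : Real.sqrt (1 + 2*(-mink pi pj)*(-mink pj pl)*(-mink pl pi)
      - (-mink pi pj)^2 - (-mink pj pl)^2 - (-mink pl pi)^2) = -det3 pi pj pl := by
    rw [show 1 + 2*(-mink pi pj)*(-mink pj pl)*(-mink pl pi)
      - (-mink pi pj)^2 - (-mink pj pl)^2 - (-mink pl pi)^2 = (-det3 pi pj pl)^2 by
        linear_combination -hQ2id]
    exact Real.sqrt_sq (by linarith)
  have ha1 : 1 ≤ -mink pi pj := one_le_neg_mink hpi hpj
  have hgt : 1 < -mink pi pj :=
    (one_lt3 ha1 (one_le_neg_mink hpj hpk) (one_le_neg_mink hpk hpi) hQ1).1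
  have htcosh : 2 * Real.cosh (arcosh (-(mink pi pj)) / 2) ^ 2 = (-mink pi pj) + 1 :=
    two_cosh_half ha1
  have hane : (-mink pi pj) + 1 ≠ 0 := by linarith
  have hEW : hypEdgeWeight pi pj pk pl =
      (((-mink pj pk) + (-mink pk pi) - (-mink pi pj) - 1) / det3 pi pj pk +
       ((-mink pj pl) + (-mink pl pi) - (-mink pi pj) - 1) / (-det3 pi pj pl)) /
      ((-mink pi pj) + 1) := by
    unfold hypEdgeWeight
    rw [hypAngle_symm pi pl pj, hypAngle_symm pj pi pl, hypAngle_symm pl pj pi,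
      tri pi pj pk hpi hpj hpk hQ1, tri pi pj pl hpi hpj hpl hQ2, hsq1, hsq2, htcosh]
  -- component equations
  have e0 : det3 pi pj pk * nk 0 = -1 * minkCross pj pk 0 + -1 * minkCross pk pi 0
      + -1 * minkCross pi pj 0 := by rw [expand3 pi pj pk nk 0, hki, hkj, hkk]
  have e1 : det3 pi pj pk * nk 1 = -1 * minkCross pj pk 1 + -1 * minkCross pk pi 1
      + -1 * minkCross pi pj 1 := by rw [expand3 pi pj pk nk 1, hki, hkj, hkk]
  have e2 : det3 pi pj pk * nk 2 = -1 * minkCross pj pk 2 + -1 * minkCross pk pi 2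
      + -1 * minkCross pi pj 2 := by rw [expand3 pi pj pk nk 2, hki, hkj, hkk]
  have f0 : det3 pi pj pl * nl 0 = -1 * minkCross pj pl 0 + -1 * minkCross pl pi 0
      + -1 * minkCross pi pj 0 := by rw [expand3 pi pj pl nl 0, hli, hlj, hll]
  have f1 : det3 pi pj pl * nl 1 = -1 * minkCross pj pl 1 + -1 * minkCross pl pi 1
      + -1 * minkCross pi pj 1 := by rw [expand3 pi pj pl nl 1, hli, hlj, hll]
  have f2 : det3 pi pj pl * nl 2 = -1 * minkCross pj pl 2 + -1 * minkCross pl pi 2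
      + -1 * minkCross pi pj 2 := by rw [expand3 pi pj pl nl 2, hli, hlj, hll]
  have G1k : det3 pi pj pk * mink nk (minkCross pi pj)
      = ((-mink pi pj) - 1) * ((-mink pj pk) + (-mink pk pi) - (-mink pi pj) - 1) := by
    simp only [det3, dot3, cross3, mink, minkCross, Matrix.cons_val_zero,
      Matrix.cons_val_one, Matrix.head_cons, Matrix.cons_val_two, Matrix.tail_cons]
      at e0 e1 e2 ⊢
    linear_combination (-((pi 2)*(pj 1) + (-1)*(pi 1)*(pj 2))) * e0 +
      ((pi 2)*(pj 0) + (-1)*(pi 0)*(pj 2)) * e1 +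
      ((-1)*(pi 1)*(pj 0) + (pi 0)*(pj 1)) * e2 +
      ((-1)*(pj 2)*(pk 2) + (pj 2)^2 + (-1)*(pj 1)*(pk 1) + (pj 1)^2 + (pj 0)*(pk 0) + (-1)*(pj 0)^2) * hpi' +
      ((-1) + (-1)*(pi 2)*(pk 2) + (-1)*(pi 1)*(pk 1) + (pi 0)*(pk 0)) * hpj'
  have G1l : det3 pi pj pl * mink nl (minkCross pi pj)
      = ((-mink pi pj) - 1) * ((-mink pj pl) + (-mink pl pi) - (-mink pi pj) - 1) := by
    simp only [det3, dot3, cross3, mink, minkCross, Matrix.cons_val_zero,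
      Matrix.cons_val_one, Matrix.head_cons, Matrix.cons_val_two, Matrix.tail_cons]
      at f0 f1 f2 ⊢
    linear_combination (-((pi 2)*(pj 1) + (-1)*(pi 1)*(pj 2))) * f0 +
      ((pi 2)*(pj 0) + (-1)*(pi 0)*(pj 2)) * f1 +
      ((-1)*(pi 1)*(pj 0) + (pi 0)*(pj 1)) * f2 +
      ((-1)*(pj 2)*(pl 2) + (pj 2)^2 + (-1)*(pj 1)*(pl 1) + (pj 1)^2 + (pj 0)*(pl 0) + (-1)*(pj 0)^2) * hpi' +
      ((-1) + (-1)*(pi 2)*(pl 2) + (-1)*(pi 1)*(pl 1) + (pi 0)*(pl 0)) * hpj'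
  have hww : mink (minkCross pi pj) (minkCross pi pj) = (mink pi pj)^2 - 1 := by
    simp only [mink, minkCross, Matrix.cons_val_zero, Matrix.cons_val_one,
      Matrix.head_cons, Matrix.cons_val_two, Matrix.tail_cons]
    linear_combination ((-1)*(pj 2)^2 + (-1)*(pj 1)^2 + (pj 0)^2) * hpi' + ((1)) * hpj'
  have hdw : det3 pi pj (minkCross pi pj) = (mink pi pj)^2 - 1 := by
    simp only [det3, dot3, cross3, mink, minkCross, Matrix.cons_val_zero,
      Matrix.cons_val_one, Matrix.head_cons, Matrix.cons_val_two, Matrix.tail_cons]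
    linear_combination ((-1)*(pj 2)^2 + (-1)*(pj 1)^2 + (pj 0)^2) * hpi' + ((1)) * hpj'
  have hwpi : mink (minkCross pi pj) pi = 0 := by
    simp only [mink, minkCross, Matrix.cons_val_zero, Matrix.cons_val_one,
      Matrix.head_cons, Matrix.cons_val_two, Matrix.tail_cons]
    ring
  have hwpj : mink (minkCross pi pj) pj = 0 := by
    simp only [mink, minkCross, Matrix.cons_val_zero, Matrix.cons_val_one,
      Matrix.head_cons, Matrix.cons_val_two, Matrix.tail_cons]
    ring
  have hdwpos : 0 < det3 pi pj (minkCross pi pj) := by rw [hdw]; exact sq_gt_one_of_lt_neg hgt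
  have hnkw : mink nk (minkCross pi pj)
      = ((-mink pi pj) - 1) * ((-mink pj pk) + (-mink pk pi) - (-mink pi pj) - 1)
        / det3 pi pj pk := by
    rw [eq_div_iff hdetk.ne']; linear_combination G1k
  have hnlw : mink nl (minkCross pi pj)
      = ((-mink pi pj) - 1) * ((-mink pj pl) + (-mink pl pi) - (-mink pi pj) - 1)
        / det3 pi pj pl := by
    rw [eq_div_iff hdetl.ne]; linear_combination G1l
  have mlin : ∀ t : Fin 3 → ℝ,
      mink (nk - nl - hypEdgeWeight pi pj pk pl • minkCross pi pj) t
        = mink nk t - mink nl t - hypEdgeWeight pi pj pk pl * mink (minkCross pi pj) t := by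
    intro t
    simp only [mink, Pi.sub_apply, Pi.smul_apply, smul_eq_mul]
    ring
  have hvpi : mink (nk - nl - hypEdgeWeight pi pj pk pl • minkCross pi pj) pi = 0 := by
    rw [mlin, hki, hli, hwpi]; ring
  have hvpj : mink (nk - nl - hypEdgeWeight pi pj pk pl • minkCross pi pj) pj = 0 := by
    rw [mlin, hkj, hlj, hwpj]; ring
  have hvw : mink (nk - nl - hypEdgeWeight pi pj pk pl • minkCross pi pj)
      (minkCross pi pj) = 0 := by
    rw [mlin, hnkw, hnlw, hww, hEW]
    field_simp
    ring
  funext i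
  have hv := expand3 pi pj (minkCross pi pj)
    (nk - nl - hypEdgeWeight pi pj pk pl • minkCross pi pj) i
  rw [hvpi, hvpj, hvw] at hv
  simp only [zero_mul, add_zero, zero_add] at hv
  have hz : (nk - nl - hypEdgeWeight pi pj pk pl • minkCross pi pj) i = 0 :=
    (mul_eq_zero.mp hv).resolve_left hdwpos.ne'
  simp only [Pi.sub_apply, Pi.smul_apply, smul_eq_mul] at hz ⊢
  linear_combination hz
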